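/- arXiv:1201.6387 — 7 statements merged into one kernel-verified Lean document; each statement's English description precedes it below -/
import Mathlib

section
/- For a random variable S taking values in {0,1,...,n} and any k ∈ {1,...,n}, the tail probability P(S ≥ k) equals ∑_{i=k}^{n} (-1)^{i-k} C(i-1,k-1) · μ̃_i / i!, where μ̃_i is the i-th factorial moment of S. -/
/-!
Since `S.descFactorial i / i! = S.choose i`, the right-hand side is the expectation of
`∑ i ∈ Icc k n, (-1) ^ (i - k) * (i - 1).choose (k - 1) * S.choose i`, so it suffices that this
sum is the indicator of `k ≤ S`. That is proved by induction on `S` via Pascal's rule: the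
increment is `∑ m, (-1) ^ (m - r) * S.choose m * m.choose r` with `r = k - 1`, which vanishes for
`S ≠ r` because `S.choose m * m.choose r = S.choose r * (S - r).choose (m - r)`.
-/

open Finset

theorem sum_Icc_neg_one_pow_mul_choose_mul_choose {r j : ℕ} (h : r ≤ j) :
    ∑ m ∈ Icc r j, (-1 : ℤ) ^ (m - r) * j.choose m * m.choose r = if j = r then 1 else 0 := by
  have hterm : ∀ t ∈ range (j + 1 - r),
      (-1 : ℤ) ^ (r + t - r) * j.choose (r + t) * (r + t).choose r
        = j.choose r * ((-1) ^ t * (j - r).choose t) := by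
    intro t _
    have hmul := Nat.choose_mul (n := j) (Nat.le_add_right r t)
    rw [Nat.add_sub_cancel_left] at hmul
    rw [Nat.add_sub_cancel_left, mul_assoc, ← Nat.cast_mul, hmul]
    push_cast
    ring
  rw [← Ico_add_one_right_eq_Icc, sum_Ico_eq_sum_range, sum_congr rfl hterm, ← mul_sum,
    show j + 1 - r = j - r + 1 by omega, Int.alternating_sum_range_choose]
  by_cases hjr : j = r
  · simp [hjr]
  · simp [hjr, show j - r ≠ 0 by omega]

theorem sum_Icc_neg_one_pow_mul_choose_pred_mul_choose {k j : ℕ} (hk : 1 ≤ k) (hkj : k ≤ j) :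
    ∑ i ∈ Icc k j, (-1 : ℤ) ^ (i - k) * (i - 1).choose (k - 1) * j.choose i = 1 := by
  induction j, hkj using Nat.le_induction with
  | base => simp
  | succ j hkj ih =>
    have hpascal : ∀ i ∈ Icc k (j + 1),
        (-1 : ℤ) ^ (i - k) * (i - 1).choose (k - 1) * (j + 1).choose i
          = (-1) ^ (i - k) * (i - 1).choose (k - 1) * j.choose i
            + (-1) ^ (i - k) * (i - 1).choose (k - 1) * j.choose (i - 1) := by
      intro i hi
      obtain ⟨m, rfl⟩ : ∃ m, i = m + 1 := ⟨i - 1, by grind⟩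
      rw [Nat.choose_succ_succ, Nat.add_sub_cancel]
      push_cast
      ring
    have hshift : ∑ i ∈ Icc k (j + 1), (-1 : ℤ) ^ (i - k) * (i - 1).choose (k - 1) * j.choose (i - 1)
        = ∑ m ∈ Icc (k - 1) j, (-1 : ℤ) ^ (m - (k - 1)) * j.choose m * m.choose (k - 1) := by
      rw [show Icc k (j + 1) = (Icc (k - 1) j).map (addRightEmbedding 1) by
          rw [map_add_right_Icc, Nat.sub_add_cancel hk], sum_map]
      refine sum_congr rfl fun m _ => ?_
      rw [addRightEmbedding_apply, Nat.add_sub_cancel, show m + 1 - k = m - (k - 1) by omega]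
      ring
    rw [sum_congr rfl hpascal, sum_add_distrib, sum_Icc_succ_top (by omega),
      Nat.choose_succ_self, Nat.cast_zero, mul_zero, add_zero, ih, hshift,
      sum_Icc_neg_one_pow_mul_choose_mul_choose (by omega), if_neg (by omega), add_zero]

theorem sum_Icc_neg_one_pow_mul_choose_pred_mul_choose_eq_ite {k n j : ℕ} (hk : 1 ≤ k)
    (hjn : j ≤ n) :
    ∑ i ∈ Icc k n, (-1 : ℤ) ^ (i - k) * (i - 1).choose (k - 1) * j.choose i
      = if k ≤ j then 1 else 0 := by
  have hvanish : ∀ i, j < i → (-1 : ℤ) ^ (i - k) * (i - 1).choose (k - 1) * j.choose i = 0 :=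
    fun i hi => by rw [Nat.choose_eq_zero_of_lt hi, Nat.cast_zero, mul_zero]
  split_ifs with hkj
  · refine Eq.trans ?_ (sum_Icc_neg_one_pow_mul_choose_pred_mul_choose hk hkj)
    refine (sum_subset (Icc_subset_Icc_right hjn) fun i hi hij => hvanish i ?_).symm
    simp only [mem_Icc] at hi hij
    omega
  · exact sum_eq_zero fun i hi => hvanish i (by simp only [mem_Icc] at hi; omega)

theorem Nat.cast_descFactorial_div_factorial {K : Type*} [Field K] [CharZero K] (j i : ℕ) :
    (j.descFactorial i : K) / i.factorial = j.choose i := by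
  rw [Nat.descFactorial_eq_factorial_mul_choose, Nat.cast_mul,
    mul_div_cancel_left₀ _ (Nat.cast_ne_zero.mpr i.factorial_ne_zero)]

theorem stmt1_general (n k : ℕ) (hk1 : 1 ≤ k) (p : ℕ → ℝ) :
    ∑ j ∈ Finset.Icc k n, p j =
      ∑ i ∈ Finset.Icc k n, (-1 : ℝ) ^ (i - k) * (Nat.choose (i - 1) (k - 1) : ℝ) *
        ((∑ j ∈ Finset.range (n + 1), p j * (Nat.descFactorial j i : ℝ)) / (Nat.factorial i : ℝ)) := by
  have hindicator : ∀ j ∈ range (n + 1),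
      ∑ i ∈ Icc k n, (-1 : ℝ) ^ (i - k) * (i - 1).choose (k - 1) * j.choose i
        = if k ≤ j then 1 else 0 := fun j hj => by
    exact_mod_cast sum_Icc_neg_one_pow_mul_choose_pred_mul_choose_eq_ite hk1
      (Nat.lt_succ_iff.mp (mem_range.mp hj))
  symm
  calc _ = ∑ j ∈ range (n + 1),
        p j * ∑ i ∈ Icc k n, (-1 : ℝ) ^ (i - k) * (i - 1).choose (k - 1) * j.choose i := by
        simp only [sum_div, mul_div_assoc, Nat.cast_descFactorial_div_factorial, mul_sum]
        rw [sum_comm]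
        exact sum_congr rfl fun _ _ => sum_congr rfl fun _ _ => by ring
    _ = ∑ j ∈ range (n + 1) with k ≤ j, p j := by
        rw [sum_filter]
        exact sum_congr rfl fun j hj => by rw [hindicator j hj, mul_ite, mul_one, mul_zero]
    _ = ∑ j ∈ Icc k n, p j := by
        congr 1
        ext j
        simp only [mem_filter, mem_range, mem_Icc]
        omega

/-- P(S ≥ k) in terms of factorial moments. -/
theorem stmt1 (n k : ℕ) (hk1 : 1 ≤ k) (hkn : k ≤ n) (p : ℕ → ℝ)
    (hp : ∀ j, 0 ≤ p j) (hsum : ∑ j ∈ Finset.range (n + 1), p j = 1) :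
    ∑ j ∈ Finset.Icc k n, p j =
      ∑ i ∈ Finset.Icc k n, (-1 : ℝ) ^ (i - k) * (Nat.choose (i - 1) (k - 1) : ℝ) *
        ((∑ j ∈ Finset.range (n + 1), p j * (Nat.descFactorial j i : ℝ)) / (Nat.factorial i : ℝ)) :=
  stmt1_general n k hk1 p
end

section
/- Let m ≥ 1 and let t_0 < t_1 < ⋯ < t_{m+1} be m+2 distinct real numbers, and let ε: {0,...,m+1} → {0,1} be a function that is not constant. Then the m+2 points (t_j, t_j², ..., t_j^m, ε(j)) ∈ ℝ^{m+1} are affinely independent, provided ε is monotone nondecreasing (i.e., there is a threshold index k with ε(j) = 0 for j < k and ε(j) = 1 for j ≥ k) and ε takes both values. -/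
/-!
Affine independence of the points amounts to invertibility of the square matrix with rows
`(1, t_j, …, t_j^m, ε_j)`, i.e. to: if `P(t_j) + d ε_j = 0` for all `j` with `deg P ≤ m`, then
`P = 0` and `d = 0`. As `ε` jumps only once, `P` takes equal values at both ends of `m` of the
`m + 1` gaps between consecutive `t_j`, so by Rolle `P'` has `m` distinct roots although
`deg P' < m`. Hence `P` is a constant, which vanishes at `t_0` (where `ε = 0`) and equals `-d` at
`t_k` (where `ε = 1`).
-/

open Finset Polynomial Matrix

theorem Polynomial.natDegree_eq_zero_of_eval_eq_of_strictMono {n : ℕ} {t : Fin (n + 1) → ℝ}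
    (ht : StrictMono t) {P : ℝ[X]} (s : Finset (Fin n))
    (hs : ∀ i ∈ s, P.eval (t i.castSucc) = P.eval (t i.succ)) (hdeg : P.natDegree ≤ #s) :
    P.natDegree = 0 := by
  by_contra hP
  have rolle : ∀ i, ∃ x ∈ Set.Ioo (t i.castSucc) (t i.succ), i ∈ s → P.derivative.eval x = 0 := by
    intro i
    have hlt : t i.castSucc < t i.succ := ht Fin.castSucc_lt_succ
    by_cases hi : i ∈ s
    · obtain ⟨x, hx, hx'⟩ := exists_deriv_eq_zero hlt P.continuous.continuousOn (hs i hi)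
      exact ⟨x, hx, fun _ => by rwa [Polynomial.deriv] at hx'⟩
    · obtain ⟨x, hx⟩ := Set.nonempty_Ioo.2 hlt
      exact ⟨x, hx, fun h => absurd h hi⟩
  choose ξ hξ hξ_root using rolle
  have hξ_mono : StrictMono ξ := fun a b hab =>
    calc ξ a < t a.succ := (hξ a).2
      _ ≤ t b.castSucc := ht.monotone (Fin.succ_le_castSucc_iff.2 hab)
      _ < ξ b := (hξ b).1
  have hP' : P.derivative = 0 := by
    refine eq_zero_of_natDegree_lt_card_of_eval_eq_zero' _ (s.image ξ) ?_ ?_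
    · simpa using hξ_root
    · rw [card_image_of_injective _ hξ_mono.injective]
      exact (natDegree_derivative_lt hP).trans_le hdeg
  exact hP (derivative_eq_zero.1 hP')

theorem eq_zero_of_eval_add_step_eq_zero {n k : ℕ} {t : Fin (n + 2) → ℝ} (ht : StrictMono t)
    (hk1 : 1 ≤ k) (hk2 : k ≤ n + 1) {P : ℝ[X]} (hdeg : P.natDegree ≤ n) {d : ℝ}
    (h : ∀ j : Fin (n + 2), P.eval (t j) + (if k ≤ (j : ℕ) then d else 0) = 0) :
    P = 0 ∧ d = 0 := by
  set jump : Fin (n + 1) := ⟨k - 1, by omega⟩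
  have hflat : ∀ i ∈ univ.erase jump, P.eval (t i.castSucc) = P.eval (t i.succ) := by
    intro i hi
    have hi' : (i : ℕ) ≠ k - 1 := fun h => (mem_erase.1 hi).1 (Fin.ext h)
    have h₀ := h i.castSucc
    have h₁ := h i.succ
    simp only [Fin.val_castSucc, Fin.val_succ] at h₀ h₁
    split_ifs at h₀ h₁ <;> first | omega | linarith
  have hconst := natDegree_eq_zero_of_eval_eq_of_strictMono ht _ hflat
    (by rwa [card_erase_of_mem (mem_univ _), card_univ, Fintype.card_fin, Nat.add_sub_cancel])
  obtain ⟨c, rfl⟩ := natDegree_eq_zero.1 hconst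
  have hc : c = 0 := by simpa [show ¬k ≤ 0 by omega] using h 0
  subst hc
  simpa using h ⟨k, by omega⟩

theorem affineIndependent_of_linearIndependent_cons {k ι : Type*} [Ring k] [Fintype ι] {n : ℕ}
    {p : ι → Fin n → k} (h : LinearIndependent k fun i => (Fin.cons 1 (p i) : Fin (n + 1) → k)) :
    AffineIndependent k p := by
  rw [affineIndependent_iff_of_fintype]
  intro w hw hp
  rw [univ.weightedVSub_eq_linear_combination hw] at hp
  refine Fintype.linearIndependent_iff.1 h w ?_
  ext c
  cases c using Fin.cases with
  | zero => simpa using hw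
  | succ l => simpa using congrFun hp l

def momentStepMatrix {n : ℕ} (t : Fin (n + 2) → ℝ) (k : ℕ) : Matrix (Fin (n + 2)) (Fin (n + 2)) ℝ :=
  Matrix.of fun j c => if (c : ℕ) < n + 1 then t j ^ (c : ℕ) else if k ≤ (j : ℕ) then 1 else 0

section momentStepMatrix

variable {n : ℕ} (t : Fin (n + 2) → ℝ) (k : ℕ)

theorem momentStepMatrix_row (j : Fin (n + 2)) :
    momentStepMatrix t k j = Fin.cons 1 fun l : Fin (n + 1) =>
      if (l : ℕ) < n then t j ^ ((l : ℕ) + 1) else if k ≤ (j : ℕ) then 1 else 0 := by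
  ext c
  cases c using Fin.cases with
  | zero => simp [momentStepMatrix]
  | succ l => simp [momentStepMatrix]

theorem momentStepMatrix_mulVec (v : Fin (n + 2) → ℝ) (j : Fin (n + 2)) :
    (momentStepMatrix t k *ᵥ v) j =
      (ofFn (n + 1) (v ∘ Fin.castSucc)).eval (t j) + if k ≤ (j : ℕ) then v (Fin.last _) else 0 := by
  rw [mulVec, dotProduct, Fin.sum_univ_castSucc]
  simp [momentStepMatrix, ofFn_eq_sum_monomial, eval_finsetSum, mul_comm, Fin.is_le]

end momentStepMatrix

theorem isUnit_momentStepMatrix {n k : ℕ} {t : Fin (n + 2) → ℝ} (ht : StrictMono t) (hk1 : 1 ≤ k)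
    (hk2 : k ≤ n + 1) : IsUnit (momentStepMatrix t k) := by
  rw [← mulVec_injective_iff_isUnit, ← coe_mulVecLin, ← LinearMap.ker_eq_bot, LinearMap.ker_eq_bot']
  intro v hv
  obtain ⟨hP, hd⟩ := eq_zero_of_eval_add_step_eq_zero ht hk1 hk2
    (Nat.lt_succ_iff.1 (ofFn_natDegree_lt (Nat.succ_pos n) (v ∘ Fin.castSucc)))
    fun j => by rw [← momentStepMatrix_mulVec, ← mulVecLin_apply, hv, Pi.zero_apply]
  ext c
  cases c using Fin.lastCases with
  | last => exact hd
  | cast l => exact congrFun (injective_ofFn _ (hP.trans (map_zero _).symm)) l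

theorem stmt7_general (m : ℕ) (t : Fin (m + 2) → ℝ) (ht : StrictMono t)
    (k : ℕ) (hk1 : 1 ≤ k) (hk2 : k ≤ m + 1) :
    AffineIndependent ℝ (fun j : Fin (m + 2) => fun l : Fin (m + 1) =>
      if (l : ℕ) < m then t j ^ ((l : ℕ) + 1)
      else if k ≤ (j : ℕ) then (1 : ℝ) else 0) := by
  apply affineIndependent_of_linearIndependent_cons
  simp_rw [← momentStepMatrix_row]
  exact linearIndependent_rows_iff_isUnit.2 (isUnit_momentStepMatrix ht hk1 hk2)

/-- `m+2` points `(t_j, t_j², …, t_j^m, ε(j))` on the moment curve lifted by a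
nonconstant monotone 0-1 last coordinate are affinely independent. -/
theorem stmt7 (m : ℕ) (hm : 1 ≤ m) (t : Fin (m + 2) → ℝ) (ht : StrictMono t)
    (k : ℕ) (hk1 : 1 ≤ k) (hk2 : k ≤ m + 1) :
    AffineIndependent ℝ (fun j : Fin (m + 2) => fun l : Fin (m + 1) =>
      if (l : ℕ) < m then t j ^ ((l : ℕ) + 1)
      else if k ≤ (j : ℕ) then (1 : ℝ) else 0) :=
  stmt7_general m t ht k hk1 hk2
end

section
/- Suppose μ = (μ_1, μ_2, μ_3) is a strict convex combination of v_0, v_k, v_i, v_{i+1} where v_j = (j/n, (j/n)², (j/n)³) and 0 < i, i+1 ≤ n, i, i+1 ≠ k, 0 < k < n. Then the coefficient of v_k in this combination equals n[n²μ_3 − (2i+1)nμ_2 + i(i+1)μ_1] / [k(k−i)(k−i−1)]. -/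
/-- The coefficient of `v_k` in a strict convex combination
`μ = π₀ v₀ + π_k v_k + π_i v_i + π_{i+1} v_{i+1}` on the normalized cubic moment curve. -/
theorem stmt12 (n k i : ℕ) (hn : 0 < n) (hk0 : 0 < k) (hkn : k < n)
    (hi0 : 0 < i) (hin : i + 1 ≤ n) (hik : i ≠ k) (hi1k : i + 1 ≠ k)
    (π0 πk πi πi1 : ℝ) (h0 : 0 < π0) (hπk : 0 < πk) (hπi : 0 < πi) (hπi1 : 0 < πi1)
    (hsum : π0 + πk + πi + πi1 = 1)
    (μ1 μ2 μ3 : ℝ)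
    (hμ : ∀ m ∈ ({1, 2, 3} : Finset ℕ),
      (if m = 1 then μ1 else if m = 2 then μ2 else μ3) =
        π0 * ((0 : ℝ) / n) ^ m + πk * ((k : ℝ) / n) ^ m +
          πi * ((i : ℝ) / n) ^ m + πi1 * (((i : ℝ) + 1) / n) ^ m) :
    πk = (n : ℝ) * ((n : ℝ) ^ 2 * μ3 - (2 * (i : ℝ) + 1) * n * μ2 + (i : ℝ) * ((i : ℝ) + 1) * μ1) /
      ((k : ℝ) * ((k : ℝ) - (i : ℝ)) * ((k : ℝ) - (i : ℝ) - 1)) := by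
  have hn' : (n : ℝ) ≠ 0 := Nat.cast_ne_zero.mpr hn.ne'
  have hk' : (k : ℝ) ≠ 0 := Nat.cast_ne_zero.mpr hk0.ne'
  have hki : (k : ℝ) - (i : ℝ) ≠ 0 := by
    have : (k : ℝ) ≠ (i : ℝ) := by exact_mod_cast (Ne.symm hik)
    intro h; exact this (by linarith)
  have hki1 : (k : ℝ) - (i : ℝ) - 1 ≠ 0 := by
    have : (k : ℝ) ≠ (i : ℝ) + 1 := by exact_mod_cast (Ne.symm hi1k)
    intro h; exact this (by linarith)
  have h1 := hμ 1 (by simp)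
  have h2 := hμ 2 (by simp)
  have h3 := hμ 3 (by simp)
  norm_num at h1 h2 h3
  field_simp at h1 h2 h3
  rw [eq_div_iff (by exact mul_ne_zero (mul_ne_zero hk' hki) hki1)]
  linear_combination -h3 + (2*(i:ℝ)+1) * h2 - (i:ℝ)*((i:ℝ)+1) * h1
end

section
/- Suppose μ = (μ_1, μ_2, μ_3) = π_0 v_0 + π_k v_k + π_i v_i + π_{i+1} v_{i+1} with π_0 + π_k + π_i + π_{i+1} = 1, where v_j = (j/n, (j/n)², (j/n)³) and 0, k, i, i+1 are distinct integers in {0,...,n}. Then π_i = n[n²μ_3 − (k+i+1)nμ_2 + k(i+1)μ_1] / [i(k−i)] and π_{i+1} = −n[n²μ_3 − (k+i)nμ_2 + k i μ_1] / [(i+1)(k−i−1)]. -/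
/-!
Clearing the denominators `n ^ j`, the coordinates say that `m_j = n ^ j μ_j` is the power sum
`π_k k ^ j + π_i i ^ j + π_{i+1} (i + 1) ^ j` (the vertex `v₀` contributes nothing). For nodes
`x, y, z`, the combination `m₃ - (x + z) m₂ + x z m₁` kills the nodes `x` and `z`, because
`t (t - x) (t - z)` vanishes there, and leaves the coefficient of the third node `y` times
`y (y - x) (y - z)`; for the nodes `k, i, i + 1` this factor is `± i (k - i)` or `± (i + 1) (k - i - 1)`.
-/

theorem coeff_mul_eq_of_powerSums {R : Type*} [CommRing R] {x y z p q r m₁ m₂ m₃ : R}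
    (h₁ : m₁ = p * x + q * y + r * z) (h₂ : m₂ = p * x ^ 2 + q * y ^ 2 + r * z ^ 2)
    (h₃ : m₃ = p * x ^ 3 + q * y ^ 3 + r * z ^ 3) :
    q * (y * (y - x) * (y - z)) = m₃ - (x + z) * m₂ + x * z * m₁ := by
  linear_combination (x + z) * h₂ - x * z * h₁ - h₃

theorem pow_mul_eq_powerSum_of_eq_div {K : Type*} [Field K] {n a b c p q r s μ : K} {m : ℕ}
    (hn : n ≠ 0) (hm : m ≠ 0)
    (h : μ = p * (0 / n) ^ m + q * (a / n) ^ m + r * (b / n) ^ m + s * (c / n) ^ m) :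
    n ^ m * μ = q * a ^ m + r * b ^ m + s * c ^ m := by
  rw [h, zero_div, zero_pow hm, div_pow, div_pow, div_pow]
  field_simp
  ring

theorem stmt13_general (n k i : ℕ) (hn : 0 < n)
    (hi0 : 0 < i) (hik : i ≠ k) (hi1k : i + 1 ≠ k)
    (π0 πk πi πi1 : ℝ)
    (μ1 μ2 μ3 : ℝ)
    (hμ : ∀ m ∈ ({1, 2, 3} : Finset ℕ),
      (if m = 1 then μ1 else if m = 2 then μ2 else μ3) =
        π0 * ((0 : ℝ) / n) ^ m + πk * ((k : ℝ) / n) ^ m +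
          πi * ((i : ℝ) / n) ^ m + πi1 * (((i : ℝ) + 1) / n) ^ m) :
    πi = (n : ℝ) * ((n : ℝ) ^ 2 * μ3 - ((k : ℝ) + (i : ℝ) + 1) * n * μ2 + (k : ℝ) * ((i : ℝ) + 1) * μ1) /
        ((i : ℝ) * ((k : ℝ) - (i : ℝ))) ∧
      πi1 = -((n : ℝ) * ((n : ℝ) ^ 2 * μ3 - ((k : ℝ) + (i : ℝ)) * n * μ2 + (k : ℝ) * (i : ℝ) * μ1)) /
        (((i : ℝ) + 1) * ((k : ℝ) - (i : ℝ) - 1)) := by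
  have hn' : (n : ℝ) ≠ 0 := by positivity
  have hi : (i : ℝ) ≠ 0 := by positivity
  have hi1 : (i : ℝ) + 1 ≠ 0 := by positivity
  have hki : (k : ℝ) - i ≠ 0 := sub_ne_zero.2 (by exact_mod_cast hik.symm)
  have hki1 : (k : ℝ) - i - 1 ≠ 0 := by
    rw [sub_sub]
    exact sub_ne_zero.2 (by exact_mod_cast hi1k.symm)
  have h₁ : (n : ℝ) ^ 1 * μ1 = πk * k ^ 1 + πi * i ^ 1 + πi1 * (i + 1) ^ 1 :=
    pow_mul_eq_powerSum_of_eq_div hn' one_ne_zero (hμ 1 (by simp))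
  have h₂ : (n : ℝ) ^ 2 * μ2 = πk * k ^ 2 + πi * i ^ 2 + πi1 * (i + 1) ^ 2 :=
    pow_mul_eq_powerSum_of_eq_div hn' two_ne_zero (hμ 2 (by simp))
  have h₃ : (n : ℝ) ^ 3 * μ3 = πk * k ^ 3 + πi * i ^ 3 + πi1 * (i + 1) ^ 3 :=
    pow_mul_eq_powerSum_of_eq_div hn' three_ne_zero (hμ 3 (by simp))
  rw [pow_one, pow_one, pow_one, pow_one] at h₁
  have hπi := coeff_mul_eq_of_powerSums (p := πk) (q := πi) (r := πi1) h₁ h₂ h₃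
  have hπi1 := coeff_mul_eq_of_powerSums (p := πk) (q := πi1) (r := πi)
    (h₁.trans (add_right_comm _ _ _)) (h₂.trans (add_right_comm _ _ _))
    (h₃.trans (add_right_comm _ _ _))
  constructor
  · rw [eq_div_iff (mul_ne_zero hi hki)]
    linear_combination hπi
  · rw [eq_div_iff (mul_ne_zero hi1 hki1)]
    linear_combination -hπi1

/-- The coefficients of `v_i` and `v_{i+1}` in an affine combination
`μ = π₀ v₀ + π_k v_k + π_i v_i + π_{i+1} v_{i+1}` on the normalized cubic moment curve. -/
theorem stmt13 (n k i : ℕ) (hn : 0 < n) (hk0 : 0 < k) (hkn : k ≤ n)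
    (hi0 : 0 < i) (hin : i + 1 ≤ n) (hik : i ≠ k) (hi1k : i + 1 ≠ k)
    (π0 πk πi πi1 : ℝ) (hsum : π0 + πk + πi + πi1 = 1)
    (μ1 μ2 μ3 : ℝ)
    (hμ : ∀ m ∈ ({1, 2, 3} : Finset ℕ),
      (if m = 1 then μ1 else if m = 2 then μ2 else μ3) =
        π0 * ((0 : ℝ) / n) ^ m + πk * ((k : ℝ) / n) ^ m +
          πi * ((i : ℝ) / n) ^ m + πi1 * (((i : ℝ) + 1) / n) ^ m) :
    πi = (n : ℝ) * ((n : ℝ) ^ 2 * μ3 - ((k : ℝ) + (i : ℝ) + 1) * n * μ2 + (k : ℝ) * ((i : ℝ) + 1) * μ1) /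
        ((i : ℝ) * ((k : ℝ) - (i : ℝ))) ∧
      πi1 = -((n : ℝ) * ((n : ℝ) ^ 2 * μ3 - ((k : ℝ) + (i : ℝ)) * n * μ2 + (k : ℝ) * (i : ℝ) * μ1)) /
        (((i : ℝ) + 1) * ((k : ℝ) - (i : ℝ) - 1)) :=
  stmt13_general n k i hn hi0 hik hi1k π0 πk πi πi1 μ1 μ2 μ3 hμ
end

section
/- Let P be the convex hull in ℝ^4 of the points r_j = (j/n, (j/n)², (j/n)³, [j ≥ k]) for j = 0,...,n, where 0 < k < n and [·] is the indicator. Then for 1 ≤ i ≤ k−2, the hyperplane through r_0, r_i, r_{i+1}, r_k is a supporting hyperplane of P, i.e., all other vertices r_x (x ∉ {0, i, i+1, k}) lie strictly on one side of it. -/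
/-!
With `p(t) = t (t - i) (t - i - 1)`, the functional
`a = (-i(i+1), (2i+1)n, -n², p(k)/n)` takes the value `([k ≤ j] p(k) - p(j)) / n` at `r_j`.
It vanishes at `j = 0, i, i+1` because these are the roots of `p`, and at `j = k` by the choice
of the last coordinate. At any other integer `x` it is negative: for `x < k` because `p` is
positive at integers away from its roots, and for `x > k` because `p` is increasing on
`[i + 1, ∞)`.
-/

open Finset

namespace CyclicPrismatoid

def supportCubic (i t : ℝ) : ℝ := t * (t - i) * (t - i - 1)

lemma supportCubic_pos_of_lt {i t : ℝ} (h0 : 0 < t) (hi : t < i) : 0 < supportCubic i t :=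
  mul_pos_of_neg_of_neg (mul_neg_of_pos_of_neg h0 (by linarith)) (by linarith)

lemma supportCubic_pos_of_gt {i t : ℝ} (hi : 0 ≤ i) (h : i + 1 < t) : 0 < supportCubic i t :=
  mul_pos (mul_pos (by linarith) (by linarith)) (by linarith)

lemma strictMonoOn_supportCubic {i : ℝ} (hi : 0 ≤ i) :
    StrictMonoOn (supportCubic i) (Set.Ici (i + 1)) := by
  intro s hs t ht hst
  simp only [Set.mem_Ici] at hs ht
  -- The quadratic factor equals `i + 1` at `s = t = i + 1` and grows in both variables there.
  have hfactor : 0 < t ^ 2 + t * s + s ^ 2 - (2 * i + 1) * (t + s) + i * (i + 1) := by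
    nlinarith [mul_nonneg (sub_nonneg.2 hs) (sub_nonneg.2 ht)]
  have hdiff : supportCubic i t - supportCubic i s =
      (t - s) * (t ^ 2 + t * s + s ^ 2 - (2 * i + 1) * (t + s) + i * (i + 1)) := by
    unfold supportCubic; ring
  linarith [mul_pos (sub_pos.2 hst) hfactor]

lemma supportCubic_natCast_pos {i x : ℕ} (hx0 : x ≠ 0) (hxi : x ≠ i) (hxi1 : x ≠ i + 1) :
    0 < supportCubic i x := by
  rcases lt_or_gt_of_ne hxi with hlt | hgt
  · exact supportCubic_pos_of_lt (by positivity) (by exact_mod_cast hlt)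
  · exact supportCubic_pos_of_gt (Nat.cast_nonneg i) (by exact_mod_cast (by omega : i + 1 < x))

lemma indicator_mul_supportCubic_eq {i k j : ℕ} (hik : i < k)
    (hj : j ∈ ({0, i, i + 1, k} : Finset ℕ)) :
    (if k ≤ j then (1 : ℝ) else 0) * supportCubic i k = supportCubic i j := by
  simp only [mem_insert, mem_singleton] at hj
  obtain rfl | hne := eq_or_ne j k
  · simp
  have hlt : ¬k ≤ j := by omega
  rw [if_neg hlt, zero_mul, eq_comm]
  rcases hj with rfl | rfl | rfl | rfl <;> simp [supportCubic] at hne ⊢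

lemma indicator_mul_supportCubic_lt {i k x : ℕ} (hik : i < k)
    (hx : x ∉ ({0, i, i + 1, k} : Finset ℕ)) :
    (if k ≤ x then (1 : ℝ) else 0) * supportCubic i k < supportCubic i x := by
  simp only [mem_insert, mem_singleton, not_or] at hx
  obtain ⟨hx0, hxi, hxi1, hxk⟩ := hx
  split_ifs with hkx
  · rw [one_mul]
    exact strictMonoOn_supportCubic (Nat.cast_nonneg i)
      (by simp only [Set.mem_Ici]; exact_mod_cast hik)
      (by simp only [Set.mem_Ici]; exact_mod_cast (by omega : i + 1 ≤ x))
      (by exact_mod_cast (by omega : k < x))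
  · rw [zero_mul]
    exact supportCubic_natCast_pos hx0 hxi hxi1

noncomputable def supportFunctional (n k i : ℝ) : Fin 4 → ℝ :=
  ![-i * (i + 1), (2 * i + 1) * n, -n ^ 2, supportCubic i k / n]

lemma supportFunctional_ne_zero {n : ℝ} (hn : n ≠ 0) (k i : ℝ) : supportFunctional n k i ≠ 0 :=
  fun h => by simpa [supportFunctional, hn] using congrFun h 2

lemma sum_supportFunctional_mul {n : ℝ} (hn : n ≠ 0) (k i t c : ℝ) :
    ∑ l, supportFunctional n k i l * ![t / n, (t / n) ^ 2, (t / n) ^ 3, c] l =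
      (c * supportCubic i k - supportCubic i t) / n := by
  simp only [Fin.sum_univ_four, supportFunctional, supportCubic, Matrix.cons_val]
  field_simp
  ring

end CyclicPrismatoid

open CyclicPrismatoid in
theorem stmt16_general (n k i : ℕ) (hk0 : 0 < k) (hkn : k < n)
    (hik : i ≤ k - 2)
    (r : ℕ → Fin 4 → ℝ)
    (hr : ∀ j, r j = ![(j : ℝ) / n, ((j : ℝ) / n) ^ 2, ((j : ℝ) / n) ^ 3,
      if k ≤ j then 1 else 0]) :
    ∃ (a : Fin 4 → ℝ) (b : ℝ), a ≠ 0 ∧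
      (∀ j ∈ ({0, i, i + 1, k} : Finset ℕ), ∑ l, a l * r j l = b) ∧
      ((∀ x ≤ n, x ∉ ({0, i, i + 1, k} : Finset ℕ) → ∑ l, a l * r x l < b) ∨
        (∀ x ≤ n, x ∉ ({0, i, i + 1, k} : Finset ℕ) → b < ∑ l, a l * r x l)) := by
  have hn : (n : ℝ) ≠ 0 := by exact_mod_cast (by omega : n ≠ 0)
  have hik' : i < k := by omega
  refine ⟨supportFunctional n k i, 0, supportFunctional_ne_zero hn _ _, fun j hj => ?_,
    Or.inl fun x _ hx => ?_⟩
  · rw [hr, sum_supportFunctional_mul hn, indicator_mul_supportCubic_eq hik' hj, sub_self,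
      zero_div]
  · rw [hr, sum_supportFunctional_mul hn]
    exact div_neg_of_neg_of_pos (sub_neg.2 (indicator_mul_supportCubic_lt hik' hx))
      (by positivity)

/-- For `1 ≤ i ≤ k-2`, the hyperplane through `r_0, r_i, r_{i+1}, r_k` supports the
prismatoid: all other vertices `r_x` lie strictly on one side. -/
theorem stmt16 (n k i : ℕ) (hn : 4 ≤ n) (hk0 : 0 < k) (hkn : k < n)
    (hi1 : 1 ≤ i) (hik : i ≤ k - 2)
    (r : ℕ → Fin 4 → ℝ)
    (hr : ∀ j, r j = ![(j : ℝ) / n, ((j : ℝ) / n) ^ 2, ((j : ℝ) / n) ^ 3,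
      if k ≤ j then 1 else 0]) :
    ∃ (a : Fin 4 → ℝ) (b : ℝ), a ≠ 0 ∧
      (∀ j ∈ ({0, i, i + 1, k} : Finset ℕ), ∑ l, a l * r j l = b) ∧
      ((∀ x ≤ n, x ∉ ({0, i, i + 1, k} : Finset ℕ) → ∑ l, a l * r x l < b) ∨
        (∀ x ≤ n, x ∉ ({0, i, i + 1, k} : Finset ℕ) → b < ∑ l, a l * r x l)) :=
  stmt16_general n k i hk0 hkn hik r hr
end

section
/- Let n ≥ 2, 0 < k < n, and let μ = (μ_1, μ_2, μ_3) lie in the tetrahedron ⟨v_0, v_k, v_i, v_{i+1}⟩ with k+1 ≤ i ≤ n−1 (where v_j = (j/n,(j/n)²,(j/n)³)), so that μ = π_0 v_0 + π_k v_k + π_i v_i + π_{i+1} v_{i+1} with nonnegative coefficients summing to 1. Then the index i satisfies i ≤ n(nμ_3 − kμ_2)/(nμ_2 − kμ_1) < i+1 whenever π_i + π_{i+1} > 0, i.e., i = ⌊n(nμ_3 − kμ_2)/(nμ_2 − kμ_1)⌋ when the ratio is not an integer equal to i+1. -/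
/-!
The moments `μₘ` are averages of `(x/n)ᵐ` over the four nodes `x = 0, k, i, i+1`. In both
`nμ₂ - kμ₁` and `n(nμ₃ - kμ₂)` the node `x` enters with the factor `x (x - k)`, which kills the
nodes `0` and `k`. Hence the ratio is the average of `i` and `i + 1` with the weights
`πᵢ i (i - k)` and `πᵢ₊₁ (i + 1)(i + 1 - k)`, which are nonnegative because `k < i`.
-/

/-- The `m`-th coordinate of `π₀ v₀ + πₖ vₖ + πₓ vₓ + π_y v_y`, where `vⱼ = (j/n, (j/n)², (j/n)³)`. -/
noncomputable def tetraMoment (n k π₀ πₖ πₓ π_y x y : ℝ) (m : ℕ) : ℝ :=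
  π₀ * (0 / n) ^ m + πₖ * (k / n) ^ m + πₓ * (x / n) ^ m + π_y * (y / n) ^ m

section tetraMoment

variable {n k π₀ πₖ πₓ π_y x y : ℝ}

theorem mul_tetraMoment_succ_sub (hn : n ≠ 0) {m : ℕ} (hm : m ≠ 0) :
    n * tetraMoment n k π₀ πₖ πₓ π_y x y (m + 1) - k * tetraMoment n k π₀ πₖ πₓ π_y x y m =
      (πₓ * x ^ m * (x - k) + π_y * y ^ m * (y - k)) / n ^ m := by
  simp only [tetraMoment, zero_div, zero_pow hm, zero_pow m.succ_ne_zero, div_pow]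
  field_simp
  ring

theorem tetraMoment_ratio_eq (hn : n ≠ 0) :
    n * (n * tetraMoment n k π₀ πₖ πₓ π_y x y 3 - k * tetraMoment n k π₀ πₖ πₓ π_y x y 2) /
        (n * tetraMoment n k π₀ πₖ πₓ π_y x y 2 - k * tetraMoment n k π₀ πₖ πₓ π_y x y 1) =
      (πₓ * x * (x - k) * x + π_y * y * (y - k) * y) / (πₓ * x * (x - k) + π_y * y * (y - k)) := by
  rw [mul_tetraMoment_succ_sub hn two_ne_zero, mul_tetraMoment_succ_sub hn one_ne_zero]
  field_simp

end tetraMoment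

theorem weighted_average_mem_Icc {a b x y : ℝ} (ha : 0 ≤ a) (hb : 0 ≤ b) (hab : 0 < a + b)
    (hxy : x ≤ y) : (a * x + b * y) / (a + b) ∈ Set.Icc x y := by
  constructor
  · rw [le_div_iff₀ hab]; nlinarith
  · rw [div_le_iff₀ hab]; nlinarith

theorem stmt18_general (n k i : ℕ)
    (hi : k + 1 ≤ i)
    (π0 πk πi πi1 : ℝ) (hπi : 0 ≤ πi) (hπi1 : 0 ≤ πi1)
    (μ1 μ2 μ3 : ℝ)
    (hμ : ∀ m ∈ ({1, 2, 3} : Finset ℕ),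
      (if m = 1 then μ1 else if m = 2 then μ2 else μ3) =
        π0 * ((0 : ℝ) / n) ^ m + πk * ((k : ℝ) / n) ^ m +
          πi * ((i : ℝ) / n) ^ m + πi1 * (((i : ℝ) + 1) / n) ^ m)
    (hden : 0 < (n : ℝ) * μ2 - (k : ℝ) * μ1) :
    (i : ℝ) ≤ (n : ℝ) * ((n : ℝ) * μ3 - (k : ℝ) * μ2) / ((n : ℝ) * μ2 - (k : ℝ) * μ1) ∧
      (n : ℝ) * ((n : ℝ) * μ3 - (k : ℝ) * μ2) / ((n : ℝ) * μ2 - (k : ℝ) * μ1) ≤ (i : ℝ) + 1 ∧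
      ((n : ℝ) * ((n : ℝ) * μ3 - (k : ℝ) * μ2) / ((n : ℝ) * μ2 - (k : ℝ) * μ1) ≠ (i : ℝ) + 1 →
        ⌊(n : ℝ) * ((n : ℝ) * μ3 - (k : ℝ) * μ2) / ((n : ℝ) * μ2 - (k : ℝ) * μ1)⌋ = (i : ℤ)) := by
  have h1 : μ1 = tetraMoment n k π0 πk πi πi1 i (i + 1) 1 := hμ 1 (by simp)
  have h2 : μ2 = tetraMoment n k π0 πk πi πi1 i (i + 1) 2 := hμ 2 (by simp)
  have h3 : μ3 = tetraMoment n k π0 πk πi πi1 i (i + 1) 3 := hμ 3 (by simp)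
  have hn : (0 : ℝ) < n := by
    refine (Nat.cast_nonneg n).lt_of_ne' fun hn ↦ hden.ne' ?_
    simp [h1, h2, tetraMoment, hn]
  have hki : (k : ℝ) + 1 ≤ i := by exact_mod_cast hi
  have ha : 0 ≤ πi * i * (i - k) := mul_nonneg (by positivity) (by linarith)
  have hb : 0 ≤ πi1 * (i + 1) * (i + 1 - k) := mul_nonneg (by positivity) (by linarith)
  have hD : (n : ℝ) * μ2 - k * μ1 = (πi * i * (i - k) + πi1 * (i + 1) * (i + 1 - k)) / n := by
    rw [h1, h2, mul_tetraMoment_succ_sub hn.ne' one_ne_zero, pow_one, pow_one, pow_one]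
  have hab : 0 < πi * i * (i - k) + πi1 * (i + 1) * (i + 1 - k) := by
    rwa [hD, div_pos_iff_of_pos_right hn] at hden
  obtain ⟨hlo, hhi⟩ : _ ∈ Set.Icc (i : ℝ) (i + 1) :=
    weighted_average_mem_Icc ha hb hab (le_add_of_nonneg_right zero_le_one)
  rw [h1, h2, h3, tetraMoment_ratio_eq hn.ne']
  refine ⟨hlo, hhi, fun hne ↦ Int.floor_eq_iff.mpr ⟨?_, ?_⟩⟩
  · push_cast; exact hlo
  · push_cast; exact hhi.lt_of_ne hne

/-- Point location: if `μ` lies in the tetrahedron `⟨v₀, v_k, v_i, v_{i+1}⟩` with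
`k+1 ≤ i ≤ n-1`, then the ratio `n(nμ₃ - kμ₂)/(nμ₂ - kμ₁)` lies in `[i, i+1]`, and
its floor is `i` unless it equals `i+1`. -/
theorem stmt18 (n k i : ℕ) (hn : 2 ≤ n) (hk0 : 0 < k) (hkn : k < n)
    (hi : k + 1 ≤ i) (hin : i ≤ n - 1)
    (π0 πk πi πi1 : ℝ) (h0 : 0 ≤ π0) (hπk : 0 ≤ πk) (hπi : 0 ≤ πi) (hπi1 : 0 ≤ πi1)
    (hsum : π0 + πk + πi + πi1 = 1) (hpos : 0 < πi + πi1)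
    (μ1 μ2 μ3 : ℝ)
    (hμ : ∀ m ∈ ({1, 2, 3} : Finset ℕ),
      (if m = 1 then μ1 else if m = 2 then μ2 else μ3) =
        π0 * ((0 : ℝ) / n) ^ m + πk * ((k : ℝ) / n) ^ m +
          πi * ((i : ℝ) / n) ^ m + πi1 * (((i : ℝ) + 1) / n) ^ m)
    (hden : 0 < (n : ℝ) * μ2 - (k : ℝ) * μ1) :
    (i : ℝ) ≤ (n : ℝ) * ((n : ℝ) * μ3 - (k : ℝ) * μ2) / ((n : ℝ) * μ2 - (k : ℝ) * μ1) ∧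
      (n : ℝ) * ((n : ℝ) * μ3 - (k : ℝ) * μ2) / ((n : ℝ) * μ2 - (k : ℝ) * μ1) ≤ (i : ℝ) + 1 ∧
      ((n : ℝ) * ((n : ℝ) * μ3 - (k : ℝ) * μ2) / ((n : ℝ) * μ2 - (k : ℝ) * μ1) ≠ (i : ℝ) + 1 →
        ⌊(n : ℝ) * ((n : ℝ) * μ3 - (k : ℝ) * μ2) / ((n : ℝ) * μ2 - (k : ℝ) * μ1)⌋ = (i : ℤ)) :=
  stmt18_general n k i hi π0 πk πi πi1 hπi hπi1 μ1 μ2 μ3 hμ hden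
end

section
/- Let S be any random variable on {0,...,n} with E[S/n] = μ_1, E[(S/n)²] = μ_2, E[(S/n)³] = μ_3, and suppose (μ_1, μ_2, μ_3) lies in the tetrahedron with vertices v_0, v_i, v_{i+1}, v_k for some 1 ≤ i ≤ k−2 (block 1 of the upper subdivision), where v_j = (j/n,(j/n)²,(j/n)³). Then P(S ≥ k) ≤ n[n²μ_3 − (2i+1)nμ_2 + i(i+1)μ_1] / [k(k−i)(k−i−1)]. -/
open Finset

/-- Sharp upper bound on `P(S ≥ k)` in block 1 of the upper subdivision:
if the moment point lies in the tetrahedron `⟨v₀, v_i, v_{i+1}, v_k⟩` with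
`1 ≤ i ≤ k-2`, then `P(S ≥ k) ≤ π_k`. -/
theorem stmt19 (n k i : ℕ) (hn : 3 ≤ n) (hk3 : 3 ≤ k) (hkn : k ≤ n)
    (hi1 : 1 ≤ i) (hik : i + 2 ≤ k)
    (p : ℕ → ℝ) (hp : ∀ j, 0 ≤ p j) (hpsum : ∑ j ∈ Finset.range (n + 1), p j = 1)
    (μ : ℕ → ℝ) (hμ : ∀ m, μ m = ∑ j ∈ Finset.range (n + 1), p j * ((j : ℝ) / n) ^ m)
    (hconv : ∃ π0 πi πi1 πk : ℝ, 0 ≤ π0 ∧ 0 ≤ πi ∧ 0 ≤ πi1 ∧ 0 ≤ πk ∧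
      π0 + πi + πi1 + πk = 1 ∧
      ∀ m ∈ ({1, 2, 3} : Finset ℕ),
        μ m = π0 * ((0 : ℝ) / n) ^ m + πi * ((i : ℝ) / n) ^ m +
          πi1 * (((i : ℝ) + 1) / n) ^ m + πk * ((k : ℝ) / n) ^ m) :
    ∑ j ∈ Finset.Icc k n, p j ≤
      (n : ℝ) * ((n : ℝ) ^ 2 * μ 3 - (2 * (i : ℝ) + 1) * (n : ℝ) * μ 2
          + (i : ℝ) * ((i : ℝ) + 1) * μ 1) /
        ((k : ℝ) * ((k : ℝ) - (i : ℝ)) * ((k : ℝ) - (i : ℝ) - 1)) := by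
  have hn0 : (0:ℝ) < n := by
    have : (3:ℝ) ≤ n := by exact_mod_cast hn
    linarith
  have hki : (i:ℝ) + 2 ≤ (k:ℝ) := by exact_mod_cast hik
  have hi0 : (1:ℝ) ≤ (i:ℝ) := by exact_mod_cast hi1
  set c : ℝ := (k : ℝ) * ((k : ℝ) - (i : ℝ)) * ((k : ℝ) - (i : ℝ) - 1) with hc_def
  have hc : 0 < c := by
    have h1 : (0:ℝ) < (k:ℝ) := by linarith
    have h2 : (0:ℝ) < (k:ℝ) - i := by linarith
    have h3 : (0:ℝ) < (k:ℝ) - i - 1 := by linarith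
    positivity
  -- the polynomial f(j) = j(j-i)(j-i-1)
  have hnum : (n : ℝ) * ((n : ℝ) ^ 2 * μ 3 - (2 * (i : ℝ) + 1) * (n : ℝ) * μ 2
      + (i : ℝ) * ((i : ℝ) + 1) * μ 1)
      = ∑ j ∈ Finset.range (n + 1), p j * ((j:ℝ) * ((j:ℝ) - i) * ((j:ℝ) - i - 1)) := by
    have key : ∀ j ∈ Finset.range (n + 1),
        p j * ((j:ℝ) * ((j:ℝ) - i) * ((j:ℝ) - i - 1))
        = (n:ℝ)^3 * (p j * ((j:ℝ)/n)^3) - ((2*(i:ℝ)+1)*(n:ℝ)^2) * (p j * ((j:ℝ)/n)^2)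
          + ((i:ℝ)*((i:ℝ)+1)*(n:ℝ)) * (p j * ((j:ℝ)/n)^1) := by
      intro j _
      field_simp
      ring
    rw [Finset.sum_congr rfl key, Finset.sum_add_distrib, Finset.sum_sub_distrib,
      ← Finset.mul_sum, ← Finset.mul_sum, ← Finset.mul_sum, ← hμ 1, ← hμ 2, ← hμ 3]
    ring
  rw [le_div_iff₀ hc, hnum]
  calc (∑ j ∈ Finset.Icc k n, p j) * c = ∑ j ∈ Finset.Icc k n, p j * c := by
        rw [Finset.sum_mul]
    _ ≤ ∑ j ∈ Finset.Icc k n, p j * ((j:ℝ) * ((j:ℝ) - i) * ((j:ℝ) - i - 1)) := by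
        apply Finset.sum_le_sum
        intro j hj
        have hkj : (k:ℝ) ≤ (j:ℝ) := by exact_mod_cast (Finset.mem_Icc.mp hj).1
        apply mul_le_mul_of_nonneg_left _ (hp j)
        have h1 : (k:ℝ) * ((k:ℝ) - i) ≤ (j:ℝ) * ((j:ℝ) - i) :=
          mul_le_mul hkj (by linarith) (by linarith) (by linarith)
        exact mul_le_mul h1 (by linarith) (by linarith)
          (mul_nonneg (by linarith) (by linarith))
    _ ≤ ∑ j ∈ Finset.range (n + 1), p j * ((j:ℝ) * ((j:ℝ) - i) * ((j:ℝ) - i - 1)) := by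
        apply Finset.sum_le_sum_of_subset_of_nonneg
        · intro j hj
          rw [Finset.mem_range]
          exact Nat.lt_succ_of_le (Finset.mem_Icc.mp hj).2
        · intro j _ _
          apply mul_nonneg (hp j)
          rcases le_or_gt j i with h | h
          · have hji : (j:ℝ) ≤ (i:ℝ) := by exact_mod_cast h
            have hj0 : (0:ℝ) ≤ (j:ℝ) := Nat.cast_nonneg j
            nlinarith [mul_nonneg (by linarith : (0:ℝ) ≤ (i:ℝ) - j) (by linarith : (0:ℝ) ≤ (i:ℝ) + 1 - j)]
          · have hji : (i:ℝ) + 1 ≤ (j:ℝ) := by exact_mod_cast h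
            have hj0 : (0:ℝ) ≤ (j:ℝ) := Nat.cast_nonneg j
            exact mul_nonneg (mul_nonneg hj0 (by linarith)) (by linarith)
end
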